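/- arXiv:1312.6492 — 2 statements merged into one kernel-verified Lean document; each statement's English description precedes it below -/
import Mathlib

section
/- Wood's reduction correctness: Let G = (V,E) be a simple graph and K ≥ 2 with |E| ≥ C(K,2). Construct the interdiction network with source s, node set A₁ = E, node set A₂ = V, sink t, arcs s→e (capacity 2) for each e ∈ A₁, arcs e→u and e→v (capacity 1) for each edge e = {u,v}, and arcs v→t (capacity 1) for each v ∈ A₂. Then removing R = |E| − C(K,2) nodes from A₁ can reduce the maximum s-t flow to exactly K if and only if G contains a clique on K vertices. -/
open Finset

/-- A feasible `s`-`t` flow on a finite directed network with capacities `cap`. -/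
structure NetworkFlow {N : Type*} [Fintype N] [DecidableEq N]
    (cap : N → N → ℝ) (s t : N) where
  f : N → N → ℝ
  nonneg : ∀ u v, 0 ≤ f u v
  capacity : ∀ u v, f u v ≤ cap u v
  conservation : ∀ v, v ≠ s → v ≠ t → (∑ u, f u v) = (∑ u, f v u)

/-- The value of a flow: net outflow at the source. -/
def NetworkFlow.value {N : Type*} [Fintype N] [DecidableEq N]
    {cap : N → N → ℝ} {s t : N} (F : NetworkFlow cap s t) : ℝ :=
  (∑ v, F.f s v) - (∑ v, F.f v s)

/-- `M` is the maximum flow value of the network. -/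
def IsMaxFlowValue {N : Type*} [Fintype N] [DecidableEq N]
    (cap : N → N → ℝ) (s t : N) (M : ℝ) : Prop :=
  IsGreatest {v : ℝ | ∃ F : NetworkFlow cap s t, F.value = v} M

/-- Node set of Wood's reduction network: source, edge-layer `A₁`, vertex-layer `A₂`, sink. -/
abbrev WoodNode (V : Type*) := Unit ⊕ Sym2 V ⊕ V ⊕ Unit

/-- Capacities of Wood's reduction network after interdicting the edge-node set `D`:
`s → e` capacity 2 for surviving `e ∈ E \ D`, `e → v` capacity 1 when `v ∈ e` survives,
`v → t` capacity 1; all other capacities 0. -/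
def woodCap {V : Type*} [Fintype V] [DecidableEq V] (G : SimpleGraph V)
    [DecidableRel G.Adj] (D : Finset (Sym2 V)) : WoodNode V → WoodNode V → ℝ
  | Sum.inl _, Sum.inr (Sum.inl e) => if e ∈ G.edgeFinset \ D then 2 else 0
  | Sum.inr (Sum.inl e), Sum.inr (Sum.inr (Sum.inl v)) =>
      if e ∈ G.edgeFinset \ D ∧ v ∈ e then 1 else 0
  | Sum.inr (Sum.inr (Sum.inl _)), Sum.inr (Sum.inr (Sum.inr _)) => 1
  | _, _ => 0

/-- The source node. -/
def woodSource (V : Type*) : WoodNode V := Sum.inl ()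

/-- The sink node. -/
def woodSink (V : Type*) : WoodNode V := Sum.inr (Sum.inr (Sum.inr ()))

/-! After interdicting `D`, the maximum flow is the number of vertices covered by the surviving
edges `E \ D`: routing one unit per covered vertex through a single surviving edge at it uses at
most the capacity 2 of that edge, while an uncovered vertex can receive nothing. Exactly
`C(K,2)` edges survive, and they cover only `K` vertices exactly when they are all pairs of a
`K`-set, i.e. the edges of a `K`-clique. -/

namespace NetworkFlow

variable {N : Type*} [Fintype N] [DecidableEq N] {cap : N → N → ℝ} {s t : N}
  (F : NetworkFlow cap s t)

theorem f_eq_zero_of_cap_nonpos {u v : N} (h : cap u v ≤ 0) : F.f u v = 0 :=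
  le_antisymm ((F.capacity u v).trans h) (F.nonneg u v)

/-- The net inflows of all nodes sum to zero, and conservation kills all but those of `s`
and `t`. -/
theorem value_eq_inflow_sub_outflow_sink (hst : s ≠ t) :
    F.value = ∑ u, F.f u t - ∑ u, F.f t u := by
  set net : N → ℝ := fun v => ∑ u, F.f u v - ∑ u, F.f v u
  have hsum : ∑ v, net v = 0 := by
    simp only [net, Finset.sum_sub_distrib]
    rw [Finset.sum_comm, sub_self]
  have hpair : ∑ v, net v = net s + net t :=
    Fintype.sum_eq_add s t hst fun v hv => by simp [net, F.conservation v hv.1 hv.2]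
  simp only [NetworkFlow.value]
  linarith [show net s + net t = 0 from hpair ▸ hsum]

theorem outflow_eq_zero_of_inflow_cap_nonpos {v : N} (hs : v ≠ s) (ht : v ≠ t)
    (hcap : ∀ u, cap u v ≤ 0) (w : N) : F.f v w = 0 := by
  have hout : ∑ u, F.f v u = 0 := by
    rw [← F.conservation v hs ht]
    exact Finset.sum_eq_zero fun u _ => F.f_eq_zero_of_cap_nonpos (hcap u)
  exact (Finset.sum_eq_zero_iff_of_nonneg fun u _ => F.nonneg v u).1 hout w (mem_univ w)

end NetworkFlow

section Wood

variable {V : Type*} [DecidableEq V]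

/-- Each vertex `v ∈ C` sends one unit `s → σ v → v → t`. -/
noncomputable def woodFlow (C : Finset V) (σ : V → Sym2 V) : WoodNode V → WoodNode V → ℝ
  | Sum.inl _, Sum.inr (Sum.inl e) => #{v ∈ C | σ v = e}
  | Sum.inr (Sum.inl e), Sum.inr (Sum.inr (Sum.inl v)) => if v ∈ C ∧ σ v = e then 1 else 0
  | Sum.inr (Sum.inr (Sum.inl v)), Sum.inr (Sum.inr (Sum.inr _)) => if v ∈ C then 1 else 0
  | _, _ => 0

variable {C : Finset V} {σ : V → Sym2 V}

theorem woodFlow_nonneg (u w : WoodNode V) : 0 ≤ woodFlow C σ u w := by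
  rcases u with _ | _ | _ | _ <;> rcases w with _ | _ | _ | _ <;> simp only [woodFlow] <;>
    positivity

variable [Fintype V] {G : SimpleGraph V} [DecidableRel G.Adj] {D : Finset (Sym2 V)}

theorem woodFlow_le_woodCap (hσ : ∀ v ∈ C, σ v ∈ G.edgeFinset \ D ∧ v ∈ σ v)
    (u w : WoodNode V) : woodFlow C σ u w ≤ woodCap G D u w := by
  rcases u with _ | e | _ | _ <;> rcases w with _ | f | v | _ <;>
    simp only [woodFlow, woodCap, le_refl]
  · split_ifs with hf
    · have hsub : {v ∈ C | σ v = f} ⊆ f.toFinset := fun v hv => by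
        rw [mem_filter] at hv
        exact Sym2.mem_toFinset.2 (hv.2 ▸ (hσ v hv.1).2)
      have hcard : #{v ∈ C | σ v = f} ≤ 2 :=
        (card_le_card hsub).trans (by rw [Sym2.card_toFinset]; split_ifs <;> norm_num)
      exact_mod_cast hcard
    · have hempty : {v ∈ C | σ v = f} = ∅ :=
        filter_eq_empty_iff.2 fun v hv hvf => hf (hvf ▸ (hσ v hv).1)
      simp [hempty]
  · by_cases h : v ∈ C ∧ σ v = e
    · rw [if_pos h, if_pos (h.2 ▸ hσ v h.1)]
    · rw [if_neg h]
      split_ifs <;> norm_num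
  · split_ifs <;> norm_num

theorem woodFlow_conservation (v : WoodNode V) (hs : v ≠ woodSource V) (ht : v ≠ woodSink V) :
    ∑ u, woodFlow C σ u v = ∑ u, woodFlow C σ v u := by
  rcases v with _ | e | v | _
  · exact absurd rfl hs
  · simp [Fintype.sum_sum_type, woodFlow, Finset.sum_boole, filter_and, inter_filter]
  · by_cases hv : v ∈ C <;> simp [Fintype.sum_sum_type, woodFlow, hv]
  · exact absurd rfl ht

variable (G D) in
noncomputable def woodNetworkFlow (hσ : ∀ v ∈ C, σ v ∈ G.edgeFinset \ D ∧ v ∈ σ v) :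
    NetworkFlow (woodCap G D) (woodSource V) (woodSink V) where
  f := woodFlow C σ
  nonneg := woodFlow_nonneg
  capacity := woodFlow_le_woodCap hσ
  conservation := woodFlow_conservation

theorem woodNetworkFlow_value (hσ : ∀ v ∈ C, σ v ∈ G.edgeFinset \ D ∧ v ∈ σ v) :
    (woodNetworkFlow G D hσ).value = #C := by
  have hfib := card_eq_sum_card_fiberwise (f := σ) (s := C) (t := univ) fun v _ => mem_univ (σ v)
  simp [NetworkFlow.value, woodNetworkFlow, Fintype.sum_sum_type, woodFlow, woodSource, hfib]

theorem woodCap_eq_zero_of_notMem_biUnion {v : V}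
    (hv : v ∉ (G.edgeFinset \ D).biUnion Sym2.toFinset) (u : WoodNode V) : woodCap G D u (Sum.inr (Sum.inr (Sum.inl v))) = 0 := by
  rcases u with _ | e | _ | _
  · rfl
  · refine if_neg fun he => hv ?_
    exact mem_biUnion.2 ⟨e, he.1, Sym2.mem_toFinset.2 he.2⟩
  · rfl
  · rfl

/-- Only the arcs `v → t` enter the sink, and a vertex covered by no surviving edge
receives, hence forwards, nothing. -/
theorem NetworkFlow.woodCap_value_le
    (F : NetworkFlow (woodCap G D) (woodSource V) (woodSink V)) :
    F.value ≤ #((G.edgeFinset \ D).biUnion Sym2.toFinset) := by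
  set C := (G.edgeFinset \ D).biUnion Sym2.toFinset
  have hvertex (v : V) : F.f (Sum.inr (Sum.inr (Sum.inl v))) (woodSink V) ≤
      if v ∈ C then 1 else 0 := by
    split_ifs with hv
    · exact F.capacity _ _
    · exact (F.outflow_eq_zero_of_inflow_cap_nonpos (by simp [woodSource]) (by simp [woodSink])
        (fun u => (woodCap_eq_zero_of_notMem_biUnion hv u).le) _).le
  have hsource : F.f (Sum.inl ()) (woodSink V) = 0 := F.f_eq_zero_of_cap_nonpos le_rfl
  have hedge (e : Sym2 V) : F.f (Sum.inr (Sum.inl e)) (woodSink V) = 0 :=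
    F.f_eq_zero_of_cap_nonpos le_rfl
  have hsink (u : WoodNode V) : F.f (woodSink V) u = 0 :=
    F.f_eq_zero_of_cap_nonpos (by rcases u with _ | _ | _ | _ <;> exact le_rfl)
  have hloop : F.f (Sum.inr (Sum.inr (Sum.inr ()))) (woodSink V) = 0 := hsink _
  calc F.value = ∑ u, F.f u (woodSink V) - ∑ u, F.f (woodSink V) u :=
        F.value_eq_inflow_sub_outflow_sink (by simp [woodSource, woodSink])
    _ = ∑ v : V, F.f (Sum.inr (Sum.inr (Sum.inl v))) (woodSink V) := by
        simp only [hsink, sum_const_zero, sub_zero, Fintype.sum_sum_type, Fintype.univ_unit,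
          hsource, hedge, hloop, zero_add, add_zero]
    _ ≤ ∑ v : V, if v ∈ C then (1 : ℝ) else 0 := sum_le_sum fun v _ => hvertex v
    _ = #C := by simp

theorem isMaxFlowValue_woodCap :
    IsMaxFlowValue (woodCap G D) (woodSource V) (woodSink V)
      #((G.edgeFinset \ D).biUnion Sym2.toFinset) := by
  set C := (G.edgeFinset \ D).biUnion Sym2.toFinset
  have hcover (v : V) : ∃ e : Sym2 V, v ∈ C → e ∈ G.edgeFinset \ D ∧ v ∈ e := by
    by_cases hv : v ∈ C
    · obtain ⟨e, he, hve⟩ := mem_biUnion.1 hv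
      exact ⟨e, fun _ => ⟨he, Sym2.mem_toFinset.1 hve⟩⟩
    · exact ⟨Sym2.diag v, fun h => absurd h hv⟩
  choose σ hσ using hcover
  exact ⟨⟨woodNetworkFlow G D hσ, woodNetworkFlow_value hσ⟩,
    fun _ ⟨F, hF⟩ => hF ▸ F.woodCap_value_le⟩

end Wood

section Cliques

variable {V : Type*} [DecidableEq V]

theorem Sym2.mk_mem_image_offDiag {S : Finset V} {a b : V} :
    s(a, b) ∈ S.offDiag.image Sym2.mk.uncurry ↔ a ∈ S ∧ b ∈ S ∧ a ≠ b := by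
  simp only [mem_image, mem_offDiag, Prod.exists, Function.uncurry_apply_pair, Sym2.eq_iff]
  constructor
  · rintro ⟨x, y, ⟨hx, hy, hxy⟩, ⟨rfl, rfl⟩ | ⟨rfl, rfl⟩⟩
    · exact ⟨hx, hy, hxy⟩
    · exact ⟨hy, hx, hxy.symm⟩
  · rintro ⟨ha, hb, hab⟩
    exact ⟨a, b, ⟨ha, hb, hab⟩, .inl ⟨rfl, rfl⟩⟩

theorem Sym2.biUnion_image_offDiag_toFinset {S : Finset V} (hS : 1 < #S) :
    (S.offDiag.image Sym2.mk.uncurry).biUnion Sym2.toFinset = S := by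
  ext v
  simp only [mem_biUnion, Sym2.mem_toFinset]
  constructor
  · rintro ⟨e, he, hve⟩
    obtain ⟨⟨a, b⟩, hab, rfl⟩ := mem_image.1 he
    obtain ⟨ha, hb, -⟩ := mem_offDiag.1 hab
    rcases Sym2.mem_iff.1 hve with rfl | rfl <;> assumption
  · intro hv
    obtain ⟨w, hw, hwv⟩ := exists_mem_ne hS v
    exact ⟨s(v, w), Sym2.mk_mem_image_offDiag.2 ⟨hv, hw, hwv.symm⟩, Sym2.mem_mk_left v w⟩

variable [Fintype V] {G : SimpleGraph V} [DecidableRel G.Adj]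

theorem SimpleGraph.IsClique.image_offDiag_subset_edgeFinset {S : Finset V} (hS : G.IsClique S) :
    S.offDiag.image Sym2.mk.uncurry ⊆ G.edgeFinset := by
  intro e he
  obtain ⟨⟨a, b⟩, hab, rfl⟩ := mem_image.1 he
  obtain ⟨ha, hb, hne⟩ := mem_offDiag.1 hab
  exact G.mem_edgeFinset.2 (hS ha hb hne)

/-- A set of edges inside `C` has at most `(#C).choose 2` elements, with equality only when it
consists of all pairs from `C`. -/
theorem SimpleGraph.isClique_of_choose_two_le_card {A : Finset (Sym2 V)} {C : Finset V}
    (hA : A ⊆ G.edgeFinset) (hAC : ∀ e ∈ A, ∀ v ∈ e, v ∈ C) (hcard : (#C).choose 2 ≤ #A) :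
    G.IsClique (C : Set V) := by
  have hsub : A ⊆ C.offDiag.image Sym2.mk.uncurry := by
    intro e he
    induction e using Sym2.ind with
    | _ a b =>
      exact Sym2.mk_mem_image_offDiag.2 ⟨hAC _ he a (Sym2.mem_mk_left a b),
        hAC _ he b (Sym2.mem_mk_right a b), G.ne_of_adj (G.mem_edgeFinset.1 (hA he))⟩
  have heq : A = C.offDiag.image Sym2.mk.uncurry :=
    eq_of_subset_of_card_le hsub (by rwa [Sym2.card_image_offDiag])
  intro a ha b hb hab
  exact G.mem_edgeFinset.1 (hA (heq ▸ Sym2.mk_mem_image_offDiag.2 ⟨ha, hb, hab⟩))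

end Cliques

/-- Wood's reduction correctness: removing `R = |E| - C(K,2)` nodes of the
edge-layer `A₁` can reduce the maximum `s`-`t` flow of the reduction network to exactly
`K` iff `G` contains a clique on `K` vertices. -/
theorem wood_reduction_correct {V : Type*} [Fintype V] [DecidableEq V]
    (G : SimpleGraph V) [DecidableRel G.Adj] (K : ℕ) (hK : 2 ≤ K)
    (hE : K.choose 2 ≤ G.edgeFinset.card) :
    (∃ D ⊆ G.edgeFinset, D.card = G.edgeFinset.card - K.choose 2 ∧
        IsMaxFlowValue (woodCap G D) (woodSource V) (woodSink V) (K : ℝ)) ↔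
      (∃ S : Finset V, G.IsNClique K S) := by
  constructor
  · rintro ⟨D, hD, hDcard, hmax⟩
    set C := (G.edgeFinset \ D).biUnion Sym2.toFinset
    have hC : #C = K := by exact_mod_cast (hmax.unique isMaxFlowValue_woodCap).symm
    have hsurvivors : #(G.edgeFinset \ D) = K.choose 2 := by
      rw [card_sdiff_of_subset hD, hDcard, Nat.sub_sub_self hE]
    refine ⟨C, G.isNClique_iff.2 ⟨?_, hC⟩⟩
    exact G.isClique_of_choose_two_le_card sdiff_subset
      (fun e he v hv => mem_biUnion.2 ⟨e, he, Sym2.mem_toFinset.2 hv⟩) (hC ▸ hsurvivors.ge)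
  · rintro ⟨S, hS⟩
    obtain ⟨hclique, hSK⟩ := G.isNClique_iff.1 hS
    set T := S.offDiag.image Sym2.mk.uncurry
    have hT : T ⊆ G.edgeFinset := hclique.image_offDiag_subset_edgeFinset
    have hTcard : #T = K.choose 2 := by rw [Sym2.card_image_offDiag, hSK]
    refine ⟨G.edgeFinset \ T, sdiff_subset, by rw [card_sdiff_of_subset hT, hTcard], ?_⟩
    have hmax := isMaxFlowValue_woodCap (G := G) (D := G.edgeFinset \ T)
    rwa [Finset.sdiff_sdiff_eq_self hT, Sym2.biUnion_image_offDiag_toFinset (hSK ▸ hK), hSK] at hmax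
end

section
/- In Wood's reduction network after deleting a set D ⊆ A₁ of edge-nodes, the maximum s-t flow equals the number of vertices of G incident to at least one edge in E \ D. -/
open Finset

/-!
The flow into the sink passes through the vertex layer, where each vertex `v` carries at most
one unit, and none at all unless some surviving edge-node feeds it; this bounds the value by the
number of covered vertices. Conversely, let every covered vertex pick one surviving edge through
it and route one unit `s → e → v → t`: an edge-node is picked by at most its two endpoints, so the
capacity 2 of `s → e` suffices.
-/

namespace NetworkFlow

variable {N : Type*} [Fintype N] [DecidableEq N] {cap : N → N → ℝ} {s t : N}

lemma eq_zero_of_cap_eq_zero (F : NetworkFlow cap s t) {u v : N} (h : cap u v = 0) :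
    F.f u v = 0 :=
  le_antisymm (h ▸ F.capacity u v) (F.nonneg u v)

lemma le_sum_in (F : NetworkFlow cap s t) {v : N} (hs : v ≠ s) (ht : v ≠ t) (w : N) :
    F.f v w ≤ ∑ u, F.f u v :=
  F.conservation v hs ht ▸ single_le_sum (fun u _ => F.nonneg v u) (mem_univ w)

/-- The net outflows of all nodes sum to zero, and only `s` and `t` contribute. -/
lemma value_eq_sum_in_sink (F : NetworkFlow cap s t) (hst : s ≠ t) (hcap : ∀ u, cap t u = 0) :
    F.value = ∑ u, F.f u t := by
  set net : N → ℝ := fun x => (∑ y, F.f x y) - ∑ y, F.f y x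
  have hnet_sum : ∑ x, net x = 0 := by
    simp only [net, sum_sub_distrib]
    rw [sum_comm, sub_self]
  have hnet_pair : ∑ x ∈ {s, t}, net x = ∑ x, net x := by
    refine sum_subset (subset_univ _) fun x _ hx => ?_
    simp only [mem_insert, mem_singleton, not_or] at hx
    exact sub_eq_zero.mpr (F.conservation x hx.1 hx.2).symm
  have hout_t : ∑ y, F.f t y = 0 := sum_eq_zero fun y _ => F.eq_zero_of_cap_eq_zero (hcap y)
  rw [sum_pair hst, hnet_sum] at hnet_pair
  simp only [net, hout_t] at hnet_pair
  rw [value]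
  linarith

end NetworkFlow

section WoodNetwork

variable {V : Type*} [Fintype V] [DecidableEq V] {G : SimpleGraph V} [DecidableRel G.Adj]
  {D : Finset (Sym2 V)}

abbrev woodVertex (v : V) : WoodNode V := Sum.inr (Sum.inr (Sum.inl v))

section UpperBound

variable (F : NetworkFlow (woodCap G D) (woodSource V) (woodSink V))

lemma woodFlow_value_eq_sum_vertex_sink : F.value = ∑ v, F.f (woodVertex v) (woodSink V) := by
  have hsink : ∀ u, woodCap G D (woodSink V) u = 0 := by
    rintro (_ | _ | _ | _) <;> rfl
  rw [F.value_eq_sum_in_sink (by simp [woodSource, woodSink]) hsink]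
  simp only [Fintype.sum_sum_type, Fintype.sum_unique]
  rw [F.eq_zero_of_cap_eq_zero rfl, F.eq_zero_of_cap_eq_zero rfl,
    sum_eq_zero fun e _ => F.eq_zero_of_cap_eq_zero rfl]
  simp

lemma woodFlow_vertex_sink_le (v : V) :
    F.f (woodVertex v) (woodSink V) ≤ if ∃ e ∈ G.edgeFinset \ D, v ∈ e then 1 else 0 := by
  split_ifs with hcov
  · exact F.capacity _ _
  · have hin : ∑ u, F.f u (woodVertex v) = 0 := by
      refine sum_eq_zero fun u _ => F.eq_zero_of_cap_eq_zero ?_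
      rcases u with _ | e | _ | _
      · rfl
      · exact if_neg fun he => hcov ⟨e, he⟩
      · rfl
      · rfl
    exact hin ▸ F.le_sum_in (by simp [woodSource]) (by simp [woodSink]) _

lemma woodFlow_value_le :
    F.value ≤ #{v | ∃ e ∈ G.edgeFinset \ D, v ∈ e} := by
  rw [woodFlow_value_eq_sum_vertex_sink, natCast_card_filter]
  exact sum_le_sum fun v _ => woodFlow_vertex_sink_le F v

end UpperBound

section LowerBound

/-- `σ v = some e` records that `v` sends its unit of flow through the surviving edge `e ∋ v`. -/
def IsWoodRouting (G : SimpleGraph V) [DecidableRel G.Adj] (D : Finset (Sym2 V))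
    (σ : V → Option (Sym2 V)) : Prop :=
  ∀ v e, σ v = some e → e ∈ G.edgeFinset \ D ∧ v ∈ e

variable {σ : V → Option (Sym2 V)}

lemma exists_isWoodRouting (G : SimpleGraph V) [DecidableRel G.Adj] (D : Finset (Sym2 V)) :
    ∃ σ, IsWoodRouting G D σ ∧ ∀ v, (σ v).isSome ↔ ∃ e ∈ G.edgeFinset \ D, v ∈ e := by
  refine ⟨fun v => if h : ∃ e ∈ G.edgeFinset \ D, v ∈ e then some h.choose else none,
    fun v e hσ => ?_, fun v => ?_⟩
  · dsimp only at hσ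
    split_ifs at hσ with h
    exact Option.some_inj.mp hσ ▸ h.choose_spec
  · dsimp only
    split_ifs with h <;> simpa using h

lemma IsWoodRouting.card_filter_eq_some_le_two (hσ : IsWoodRouting G D σ) (e : Sym2 V) :
    #{v | σ v = some e} ≤ 2 :=
  calc #{v | σ v = some e} ≤ #e.toFinset :=
        card_le_card fun v hv => Sym2.mem_toFinset.mpr (hσ v e (mem_filter.mp hv).2).2
    _ ≤ 2 := by rw [Sym2.card_toFinset]; split_ifs <;> norm_num

def woodRoutingFlow (σ : V → Option (Sym2 V)) : WoodNode V → WoodNode V → ℝ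
  | Sum.inl _, Sum.inr (Sum.inl e) => #{v | σ v = some e}
  | Sum.inr (Sum.inl e), Sum.inr (Sum.inr (Sum.inl v)) => if σ v = some e then 1 else 0
  | Sum.inr (Sum.inr (Sum.inl v)), Sum.inr (Sum.inr (Sum.inr _)) => if (σ v).isSome then 1 else 0
  | _, _ => 0

lemma woodRoutingFlow_nonneg (u w : WoodNode V) : 0 ≤ woodRoutingFlow σ u w := by
  rcases u with _ | _ | _ | _ <;> rcases w with _ | _ | _ | _ <;>
    simp only [woodRoutingFlow] <;> positivity

lemma IsWoodRouting.woodRoutingFlow_le_woodCap (hσ : IsWoodRouting G D σ) (u w : WoodNode V) :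
    woodRoutingFlow σ u w ≤ woodCap G D u w := by
  rcases u with _ | e | v | _ <;> rcases w with _ | e' | v' | _ <;>
    simp only [woodRoutingFlow, woodCap, le_refl]
  · split_ifs with he
    · exact_mod_cast hσ.card_filter_eq_some_le_two e'
    · refine le_of_eq (Nat.cast_eq_zero.mpr (card_eq_zero.mpr (filter_eq_empty_iff.mpr ?_)))
      exact fun v _ hv => he (hσ v e' hv).1
  · by_cases h : σ v' = some e
    · simp [h, hσ v' e h]
    · simp only [h, if_false]; split_ifs <;> norm_num
  · split_ifs <;> norm_num

lemma woodRoutingFlow_conservation (u : WoodNode V) (hs : u ≠ woodSource V)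
    (ht : u ≠ woodSink V) : ∑ w, woodRoutingFlow σ w u = ∑ w, woodRoutingFlow σ u w := by
  rcases u with _ | e | v | _
  · exact absurd rfl hs
  · simp [Fintype.sum_sum_type, woodRoutingFlow]
  · simp only [Fintype.sum_sum_type, woodRoutingFlow, Fintype.sum_unique, sum_const_zero,
      add_zero, zero_add]
    cases σ v <;> simp
  · exact absurd rfl ht

def IsWoodRouting.flow (hσ : IsWoodRouting G D σ) :
    NetworkFlow (woodCap G D) (woodSource V) (woodSink V) where
  f := woodRoutingFlow σ
  nonneg := woodRoutingFlow_nonneg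
  capacity := hσ.woodRoutingFlow_le_woodCap
  conservation := woodRoutingFlow_conservation

lemma IsWoodRouting.flow_value (hσ : IsWoodRouting G D σ) :
    hσ.flow.value = #{v | (σ v).isSome} := by
  have hin : ∑ u, woodRoutingFlow σ u (woodSource V) = 0 :=
    sum_eq_zero fun u _ => by rcases u with _ | _ | _ | _ <;> rfl
  simp only [NetworkFlow.value, IsWoodRouting.flow, hin, sub_zero]
  simp only [woodSource, Fintype.sum_sum_type, woodRoutingFlow, sum_const_zero, add_zero,
    zero_add, natCast_card_filter]
  rw [sum_comm]
  refine sum_congr rfl fun v _ => ?_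
  cases σ v <;> simp

end LowerBound

end WoodNetwork

theorem wood_max_flow_after_interdiction_general {V : Type*} [Fintype V] [DecidableEq V]
    (G : SimpleGraph V) [DecidableRel G.Adj] (D : Finset (Sym2 V)) :
    IsMaxFlowValue (woodCap G D) (woodSource V) (woodSink V)
      ((Finset.univ.filter (fun v : V => ∃ e ∈ G.edgeFinset \ D, v ∈ e)).card : ℝ) := by
  obtain ⟨σ, hσ, hcover⟩ := exists_isWoodRouting G D
  refine ⟨⟨hσ.flow, ?_⟩, ?_⟩
  · rw [hσ.flow_value, filter_congr fun v _ => hcover v]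
  · rintro _ ⟨F, rfl⟩
    exact woodFlow_value_le F

/-- After deleting an edge-node set `D`, the maximum `s`-`t` flow of Wood's
reduction network equals the number of vertices incident to some edge of `E \ D`. -/
theorem wood_max_flow_after_interdiction {V : Type*} [Fintype V] [DecidableEq V]
    (G : SimpleGraph V) [DecidableRel G.Adj] (D : Finset (Sym2 V)) (hD : D ⊆ G.edgeFinset) :
    IsMaxFlowValue (woodCap G D) (woodSource V) (woodSink V)
      ((Finset.univ.filter (fun v : V => ∃ e ∈ G.edgeFinset \ D, v ∈ e)).card : ℝ) :=
  wood_max_flow_after_interdiction_general G D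
end
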